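/- Let $\tau = b+ia$ with $a > 0$, $d$ a positive integer, and for $k \in \mathbb{Z}$ define $\vartheta_{d,k}(z) = \sum_{n \in \mathbb{Z}} e^{\pi i \tau d (n + k/d)^2} e^{2\pi i d (n + k/d) z}$. Then $\vartheta_{d,k+d}(z) = \vartheta_{d,k}(z)$ for all $z$, and the functions $\vartheta_{d,0}, \dots, \vartheta_{d,d-1}$ are linearly independent over $\mathbb{C}$ as functions on $\mathbb{C}$. -/

import Mathlib

/-!
Shifting the summation index `n ↦ n + 1` gives `ϑ_{d,k+d} = ϑ_{d,k}`. Translation `z ↦ z + 1/d`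
multiplies `ϑ_{d,k}` by `e^{2πik/d}`, so `ϑ_{d,0}, …, ϑ_{d,d-1}` are eigenvectors of one linear
operator with pairwise distinct eigenvalues (powers of a primitive `d`-th root of unity), and they
are linearly independent as soon as none of them vanishes identically. Up to an exponential factor
and an affine change of variable, `ϑ_{d,k}` is the Jacobi theta function `θ(·, dτ)`, which is not
identically zero because its mean over a real period is its constant Fourier coefficient `1`.
-/

/-- The degree-`d` theta basis function
`ϑ_{d,k}(z) = ∑ₙ e^{πiτd(n+k/d)²} e^{2πid(n+k/d)z}`. -/
noncomputable def thetaBasis (τ : ℂ) (d : ℕ) (k : ℤ) (z : ℂ) : ℂ :=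
  ∑' n : ℤ, Complex.exp (Real.pi * Complex.I * τ * (d : ℂ) *
      ((n : ℂ) + (k : ℂ) / (d : ℂ)) ^ 2) *
    Complex.exp (2 * Real.pi * Complex.I * (d : ℂ) *
      ((n : ℂ) + (k : ℂ) / (d : ℂ)) * z)

open Complex Real

lemma thetaBasis_add_degree (τ : ℂ) (d : ℕ) (k : ℤ) :
    thetaBasis τ d (k + d) = thetaBasis τ d k := by
  rcases eq_or_ne d 0 with rfl | hd
  · simp
  funext z
  refine Eq.trans ?_ ((Equiv.addRight (1 : ℤ)).tsum_eq _)
  refine tsum_congr fun n => ?_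
  have hshift : ((n + 1 : ℤ) : ℂ) + k / d = n + ((k + d : ℤ) : ℂ) / d := by
    push_cast; field_simp; ring
  simp only [Equiv.coe_addRight, hshift]

lemma thetaBasis_add_inv_degree (τ : ℂ) {d : ℕ} (hd : d ≠ 0) (k : ℤ) (z : ℂ) :
    thetaBasis τ d k (z + (d : ℂ)⁻¹) = cexp (2 * π * I * k / d) * thetaBasis τ d k z := by
  rw [thetaBasis, thetaBasis, ← tsum_mul_left]
  refine tsum_congr fun n => ?_
  have hexp : 2 * π * I * d * (n + k / d) * (z + (d : ℂ)⁻¹)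
      = 2 * π * I * d * (n + k / d) * z + 2 * π * I * k / d + n * (2 * π * I) := by
    field_simp; ring
  rw [hexp, Complex.exp_add, Complex.exp_add, exp_int_mul_two_pi_mul_I]
  ring

lemma thetaBasis_eq_exp_mul_jacobiTheta₂ (τ : ℂ) {d : ℕ} (hd : d ≠ 0) (k : ℤ) (z : ℂ) :
    thetaBasis τ d k z = cexp (π * I * τ * k ^ 2 / d + 2 * π * I * k * z) *
      jacobiTheta₂ (d * z + k * τ) (d * τ) := by
  rw [jacobiTheta₂, ← tsum_mul_left]
  refine tsum_congr fun n => ?_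
  rw [jacobiTheta₂_term, ← Complex.exp_add, ← Complex.exp_add]
  congr 1
  field_simp
  ring

lemma integral_jacobiTheta₂_term_ofReal_of_ne_zero {n : ℤ} (hn : n ≠ 0) (σ : ℂ) :
    ∫ x : ℝ in 0..1, jacobiTheta₂_term n x σ = 0 := by
  have hc : 2 * π * I * n ≠ 0 := by simp [pi_ne_zero, hn]
  simp only [jacobiTheta₂_term, Complex.exp_add, intervalIntegral.integral_mul_const,
    integral_exp_mul_complex hc, ofReal_one, ofReal_zero, mul_one, mul_zero]
  rw [mul_comm _ (n : ℂ), exp_int_mul_two_pi_mul_I]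
  simp

lemma integral_jacobiTheta₂_ofReal {σ : ℂ} (hσ : 0 < σ.im) :
    ∫ x : ℝ in 0..1, jacobiTheta₂ x σ = 1 := by
  have hnorm (n : ℤ) (x : ℝ) : ‖jacobiTheta₂_term n x σ‖ = ‖jacobiTheta₂_term n 0 σ‖ := by
    simp [norm_jacobiTheta₂_term]
  have hsum : Summable fun n : ℤ ↦ ‖jacobiTheta₂_term n 0 σ‖ :=
    ((summable_jacobiTheta₂_term_iff 0 σ).mpr hσ).norm
  simp only [jacobiTheta₂]
  rw [intervalIntegral.integral_of_le zero_le_one,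
    ← MeasureTheory.integral_tsum_of_summable_integral_norm]
  · rw [tsum_eq_single 0]
    · simp [jacobiTheta₂_term]
    · intro n hn
      rw [← intervalIntegral.integral_of_le zero_le_one,
        integral_jacobiTheta₂_term_ofReal_of_ne_zero hn]
  · intro n
    have hcont : Continuous fun x : ℝ ↦ jacobiTheta₂_term n x σ := by
      unfold jacobiTheta₂_term; fun_prop
    exact hcont.integrableOn_Ioc
  · simpa [hnorm] using hsum

lemma exists_jacobiTheta₂_ofReal_ne_zero {σ : ℂ} (hσ : 0 < σ.im) :
    ∃ x : ℝ, jacobiTheta₂ x σ ≠ 0 := by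
  by_contra! h
  simpa [h] using integral_jacobiTheta₂_ofReal hσ

lemma thetaBasis_ne_zero {τ : ℂ} (hτ : 0 < τ.im) {d : ℕ} (hd : d ≠ 0) (k : ℤ) :
    thetaBasis τ d k ≠ 0 := by
  have hdτ : 0 < ((d : ℂ) * τ).im := by simpa using mul_pos (Nat.cast_pos.mpr hd.bot_lt) hτ
  obtain ⟨x, hx⟩ := exists_jacobiTheta₂_ofReal_ne_zero hdτ
  have hz : (d : ℂ) * ((x - k * τ) / d) + k * τ = x := by field_simp; ring
  refine Function.ne_iff.mpr ⟨(x - k * τ) / d, ?_⟩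
  rw [thetaBasis_eq_exp_mul_jacobiTheta₂ τ hd, hz]
  exact mul_ne_zero (Complex.exp_ne_zero _) hx

theorem linearIndependent_of_apply_add_eq_smul {ι G K V : Type*} [Add G] [Field K]
    [AddCommGroup V] [Module K V] {f : ι → G → V} {c : G} {μ : ι → K}
    (hμ : Function.Injective μ) (hf : ∀ i, f i ≠ 0) (hfc : ∀ i x, f i (x + c) = μ i • f i x) :
    LinearIndependent K f :=
  Module.End.eigenvectors_linearIndependent' (LinearMap.funLeft K V (· + c)) μ hμ f fun i ↦
    Module.End.hasEigenvector_iff.mpr ⟨Module.End.mem_eigenspace_iff.mpr (funext (hfc i)), hf i⟩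

/-- `ϑ_{d,k+d} = ϑ_{d,k}`, and `ϑ_{d,0}, …, ϑ_{d,d-1}` are linearly
independent over `ℂ` as functions on `ℂ`. -/
theorem thetaBasis_periodic_and_linearIndependent
    (a b : ℝ) (ha : 0 < a) (τ : ℂ) (hτ : τ = (b : ℂ) + (a : ℂ) * Complex.I)
    (d : ℕ) (hd : 0 < d) :
    (∀ (k : ℤ) (z : ℂ), thetaBasis τ d (k + d) z = thetaBasis τ d k z) ∧
    LinearIndependent ℂ (fun k : Fin d => thetaBasis τ d (k : ℤ)) := by
  refine ⟨fun k z ↦ by rw [thetaBasis_add_degree], ?_⟩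
  have hτ_im : 0 < τ.im := by simpa [hτ] using ha
  have hζ := Complex.isPrimitiveRoot_exp d hd.ne'
  have heigen (k : Fin d) (z : ℂ) : thetaBasis τ d k (z + (d : ℂ)⁻¹)
      = cexp (2 * π * I / d) ^ (k : ℕ) • thetaBasis τ d k z := by
    rw [thetaBasis_add_inv_degree τ hd.ne', ← Complex.exp_nat_mul, smul_eq_mul]
    congr 2
    push_cast
    ring
  exact linearIndependent_of_apply_add_eq_smul (fun j k h ↦ Fin.ext (hζ.pow_inj j.2 k.2 h))
    (fun k ↦ thetaBasis_ne_zero hτ_im hd.ne' k) heigen
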